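/- arXiv:2604.14057 — 2 statements merged into one kernel-verified Lean document; each statement's English description precedes it below -/
import Mathlib

section
/- Let F be a K-CNF formula, x an assignment, and G a maximal set of pairwise variable-disjoint K-clauses of F unsatisfied by x. If φ is any total assignment to the variables appearing in G, then every clause of the restricted formula F|_φ that remains unsatisfied and not eliminated has at most K−1 literals. -/
/-- A clause over `n` Boolean variables: a finite set of literals, where a literal
is a pair `(i, b)` meaning "variable `i` has value `b`". -/
abbrev Clause (n : ℕ) := Finset (Fin n × Bool)

/-- The set of variables appearing in a clause. -/
def Clause.vars {n : ℕ} (c : Clause n) : Finset (Fin n) := c.image Prod.fst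

/-- A clause is unsatisfied by an assignment `x` iff every literal evaluates to false. -/
def Clause.unsat {n : ℕ} (c : Clause n) (x : Fin n → Bool) : Prop :=
  ∀ l ∈ c, x l.1 ≠ l.2

/-- Let `F` be a `K`-CNF formula (each clause has at most `K` literals and is
nonempty), `x` an assignment, and `G` a maximal set of pairwise variable-disjoint
clauses of `F` unsatisfied by `x`.  Let `W` be the variables occurring in `G` and
`φ` an assignment to them.  Then every clause of `F` unsatisfied by `x` that is not
eliminated by `φ` (i.e., `φ` satisfies no literal of it) has, after removing the
literals on variables of `W`, at most `K − 1` literals. -/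
theorem restricted_clause_size {n K : ℕ} (hK : 1 ≤ K)
    (F G : Finset (Clause n)) (x : Fin n → Bool) (φ : Fin n → Bool)
    (hsize : ∀ c ∈ F, c.card ≤ K)
    (hne : ∀ c ∈ F, c.Nonempty)
    (hGF : G ⊆ F)
    (hGunsat : ∀ g ∈ G, Clause.unsat g x)
    (hGdisj : ∀ g ∈ G, ∀ g' ∈ G, g ≠ g' → Disjoint g.vars g'.vars)
    (hGmax : ∀ c ∈ F, Clause.unsat c x →
      (∀ g ∈ G, Disjoint c.vars g.vars) → c ∈ G) :
    ∀ c ∈ F, Clause.unsat c x →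
      (¬ ∃ l ∈ c, l.1 ∈ G.biUnion Clause.vars ∧ φ l.1 = l.2) →
      (c.filter (fun l => l.1 ∉ G.biUnion Clause.vars)).card ≤ K - 1 := by
  intro c hcF hcun _hel
  by_cases h : ∃ l ∈ c, l.1 ∈ G.biUnion Clause.vars
  · obtain ⟨l, hlc, hlW⟩ := h
    have hsub : c.filter (fun l => l.1 ∉ G.biUnion Clause.vars) ⊂ c := by
      refine Finset.ssubset_iff_of_subset (Finset.filter_subset _ _) |>.mpr ?_
      exact ⟨l, hlc, fun hm => (Finset.mem_filter.mp hm).2 hlW⟩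
    have h1 := Finset.card_lt_card hsub
    have h2 := hsize c hcF
    omega
  · exfalso
    push_neg at h
    have hcG : c ∈ G := by
      apply hGmax c hcF hcun
      intro g hg
      rw [Finset.disjoint_left]
      intro v hv hv'
      simp only [Clause.vars, Finset.mem_image] at hv
      obtain ⟨l, hlc, rfl⟩ := hv
      exact h l hlc (Finset.mem_biUnion.mpr ⟨g, hg, hv'⟩)
    obtain ⟨l, hlc⟩ := hne c hcF
    exact h l hlc (Finset.mem_biUnion.mpr ⟨c, hcG, Finset.mem_image_of_mem Prod.fst hlc⟩)
end

section
/- For integers K ≥ 3 and t ≥ 1 divisible by K, with s = t/K, the bound ⌈ t·ln(K)·K^t / ( C(t,s)·(K−1)^s ) ⌉ ≤ t²·(K−1)^{t − 2t/K} holds for all sufficiently large t. -/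
set_option maxHeartbeats 1000000

open Real Nat

/-- Stirling formula as an identity: `n! = stirlingSeq n * (√(2n) (n/e)^n)` for `n ≥ 1`. -/
lemma fact_eq_stirling (n : ℕ) (hn : 1 ≤ n) :
    (n ! : ℝ) = Stirling.stirlingSeq n *
      (Real.sqrt (2 * n) * ((n : ℝ) / Real.exp 1) ^ n) := by
  have hn' : 0 < (n : ℝ) := by exact_mod_cast hn
  have hd : Real.sqrt (2 * n) * ((n : ℝ) / Real.exp 1) ^ n ≠ 0 := by positivity
  rw [Stirling.stirlingSeq, div_mul_cancel₀ _ hd]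

/-- For an integer `K ≥ 3`, for all sufficiently large `t` divisible by `K`, with
`s = t/K`, we have `⌈ t·ln(K)·K^t / ( C(t,s)·(K−1)^s ) ⌉ ≤ t²·(K−1)^{t − 2t/K}`. -/
theorem covering_code_size_bound (K : ℕ) (hK : 3 ≤ K) :
    ∃ t₀ : ℕ, ∀ t : ℕ, t₀ ≤ t → K ∣ t →
      (⌈((t : ℝ) * Real.log K * (K : ℝ) ^ t) /
          ((Nat.choose t (t / K) : ℝ) * ((K : ℝ) - 1) ^ (t / K))⌉₊ : ℝ)
        ≤ (t : ℝ) ^ 2 * ((K : ℝ) - 1) ^ (t - 2 * (t / K)) := by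
  obtain ⟨a, ha, hlb⟩ := Stirling.stirlingSeq'_bounded_by_pos_constant
  set B : ℝ := Stirling.stirlingSeq 1 with hBdef
  have hB : 0 < B := Stirling.stirlingSeq'_pos 0
  have hub : ∀ n : ℕ, Stirling.stirlingSeq (n + 1) ≤ B := fun n =>
    Stirling.stirlingSeq'_antitone (Nat.zero_le n)
  have hKR : (3 : ℝ) ≤ (K : ℝ) := by exact_mod_cast hK
  have hlogK : 0 ≤ Real.log K := Real.log_nonneg (by linarith)
  set M : ℝ := Real.log K * B ^ 2 / a with hMdef
  have hM : 0 ≤ M := by positivity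
  refine ⟨max K (⌈(Real.sqrt 2 * M + 1) ^ 2⌉₊), fun t ht hdvd => ?_⟩
  have htK : K ≤ t := le_trans (le_max_left _ _) ht
  have htsq : (Real.sqrt 2 * M + 1) ^ 2 ≤ (t : ℝ) := by
    refine le_trans (Nat.le_ceil _) ?_
    exact_mod_cast le_trans (le_max_right _ _) ht
  set s : ℕ := t / K with hsdef
  set m : ℕ := t - s with hmdef
  have hKt : s * K = t := Nat.div_mul_cancel hdvd
  have hs1 : 1 ≤ s := (Nat.one_le_div_iff (by omega)).mpr htK
  have hsle : s ≤ t := Nat.div_le_self t K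
  have h3s : s * 3 ≤ t := by
    calc s * 3 ≤ s * K := Nat.mul_le_mul_left s hK
    _ = t := hKt
  have h2s : 2 * s ≤ t := by omega
  have hm1 : 1 ≤ m := by omega
  have hmle : m ≤ t := by omega
  have hsm : s + m = t := by omega
  have ht1 : 1 ≤ t := by omega
  have htR : (1 : ℝ) ≤ (t : ℝ) := by exact_mod_cast ht1
  -- cast identities
  have hsR : (K : ℝ) * (s : ℝ) = (t : ℝ) := by
    have := hKt; push_cast [← this]; ring
  have hmcast : (m : ℝ) = (t : ℝ) - (s : ℝ) := by
    rw [hmdef]; push_cast [Nat.cast_sub hsle]; ring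
  have hmK : (K : ℝ) * (m : ℝ) = (t : ℝ) * ((K : ℝ) - 1) := by
    rw [hmcast]; linarith [hsR]
  have hp : ∀ x : ℝ, x ^ t = x ^ s * x ^ m := fun x => by rw [← pow_add, hsm]
  -- the key algebraic identity
  have hid : (K : ℝ) ^ t * ((s : ℝ) ^ s * (m : ℝ) ^ m) = (t : ℝ) ^ t * ((K : ℝ) - 1) ^ m := by
    calc (K : ℝ) ^ t * ((s : ℝ) ^ s * (m : ℝ) ^ m)
        = ((K : ℝ) ^ s * (s : ℝ) ^ s) * ((K : ℝ) ^ m * (m : ℝ) ^ m) := by rw [hp]; ring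
      _ = ((K : ℝ) * s) ^ s * ((K : ℝ) * m) ^ m := by rw [mul_pow, mul_pow]
      _ = (t : ℝ) ^ s * ((t : ℝ) * ((K : ℝ) - 1)) ^ m := by rw [hsR, hmK]
      _ = ((t : ℝ) ^ s * (t : ℝ) ^ m) * ((K : ℝ) - 1) ^ m := by rw [mul_pow]; ring
      _ = (t : ℝ) ^ t * ((K : ℝ) - 1) ^ m := by rw [← hp]
  -- Stirling bounds
  have hstb : ∀ n : ℕ, 1 ≤ n → a ≤ Stirling.stirlingSeq n ∧ Stirling.stirlingSeq n ≤ B := by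
    intro n hn
    cases n with
    | zero => omega
    | succ k => exact ⟨hlb k, hub k⟩
  have hsR0 : 0 < (s : ℝ) := by exact_mod_cast hs1
  have hmR0 : 0 < (m : ℝ) := by exact_mod_cast hm1
  have htR0 : 0 < (t : ℝ) := by linarith
  have hft : a * (Real.sqrt (2 * t) * ((t : ℝ) / Real.exp 1) ^ t) ≤ (t ! : ℝ) := by
    rw [fact_eq_stirling t ht1]
    exact mul_le_mul_of_nonneg_right (hstb t ht1).1 (by positivity)
  have hfs : (s ! : ℝ) ≤ B * (Real.sqrt (2 * s) * ((s : ℝ) / Real.exp 1) ^ s) := by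
    rw [fact_eq_stirling s hs1]
    exact mul_le_mul_of_nonneg_right (hstb s hs1).2 (by positivity)
  have hfm : (m ! : ℝ) ≤ B * (Real.sqrt (2 * m) * ((m : ℝ) / Real.exp 1) ^ m) := by
    rw [fact_eq_stirling m hm1]
    exact mul_le_mul_of_nonneg_right (hstb m hm1).2 (by positivity)
  set C : ℝ := (Nat.choose t s : ℝ) with hCdef
  have hC : 0 < C := by rw [hCdef]; exact_mod_cast Nat.choose_pos hsle
  have hfactid : C * (s ! : ℝ) * (m ! : ℝ) = (t ! : ℝ) := by
    rw [hCdef, hmdef]; exact_mod_cast congrArg (Nat.cast (R := ℝ))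
      (Nat.choose_mul_factorial_mul_factorial hsle)
  have h0 : a * (Real.sqrt (2 * t) * ((t : ℝ) / Real.exp 1) ^ t) ≤
      C * (B * (Real.sqrt (2 * s) * ((s : ℝ) / Real.exp 1) ^ s)) *
        (B * (Real.sqrt (2 * m) * ((m : ℝ) / Real.exp 1) ^ m)) := by
    refine le_trans hft ?_
    rw [← hfactid]
    gcongr
  -- multiply by e^t to cancel exponentials
  have hcancel : ∀ n : ℕ, ((n : ℝ) / Real.exp 1) ^ n * Real.exp 1 ^ n = (n : ℝ) ^ n := by
    intro n; rw [div_pow, div_mul_cancel₀]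
    exact pow_ne_zero _ (Real.exp_ne_zero 1)
  have h1 : a * (Real.sqrt (2 * t) * (t : ℝ) ^ t) ≤
      B ^ 2 * C * (Real.sqrt (2 * s) * Real.sqrt (2 * m) * ((s : ℝ) ^ s * (m : ℝ) ^ m)) := by
    have hE : (0 : ℝ) ≤ Real.exp 1 ^ t := by positivity
    have h0e := mul_le_mul_of_nonneg_right h0 hE
    calc a * (Real.sqrt (2 * t) * (t : ℝ) ^ t)
        = a * (Real.sqrt (2 * t) * (((t : ℝ) / Real.exp 1) ^ t * Real.exp 1 ^ t)) := by
          rw [hcancel]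
      _ = a * (Real.sqrt (2 * t) * ((t : ℝ) / Real.exp 1) ^ t) * Real.exp 1 ^ t := by ring
      _ ≤ C * (B * (Real.sqrt (2 * s) * ((s : ℝ) / Real.exp 1) ^ s)) *
            (B * (Real.sqrt (2 * m) * ((m : ℝ) / Real.exp 1) ^ m)) * Real.exp 1 ^ t := h0e
      _ = B ^ 2 * C * (Real.sqrt (2 * s) * Real.sqrt (2 * m) *
            ((((s : ℝ) / Real.exp 1) ^ s * Real.exp 1 ^ s) *
             (((m : ℝ) / Real.exp 1) ^ m * Real.exp 1 ^ m))) := by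
          rw [show Real.exp 1 ^ t = Real.exp 1 ^ s * Real.exp 1 ^ m from hp _]; ring
      _ = B ^ 2 * C * (Real.sqrt (2 * s) * Real.sqrt (2 * m) * ((s : ℝ) ^ s * (m : ℝ) ^ m)) := by
          rw [hcancel, hcancel]
  -- sqrt bounds
  have hsq_s : Real.sqrt (2 * s) ≤ Real.sqrt (2 * t) := by
    apply Real.sqrt_le_sqrt; have : (s : ℝ) ≤ t := by exact_mod_cast hsle
    linarith
  have hsq_m : Real.sqrt (2 * m) ≤ Real.sqrt (2 * t) := by
    apply Real.sqrt_le_sqrt; have : (m : ℝ) ≤ t := by exact_mod_cast hmle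
    linarith
  have hst0 : 0 < Real.sqrt (2 * t) := Real.sqrt_pos.mpr (by positivity)
  have hK1 : (1 : ℝ) ≤ (K : ℝ) - 1 := by linarith
  have hKm0 : (0 : ℝ) ≤ ((K : ℝ) - 1) ^ m := by positivity
  -- the key inequality
  have key : a * (K : ℝ) ^ t ≤ B ^ 2 * C * Real.sqrt (2 * t) * ((K : ℝ) - 1) ^ m := by
    have hQ : (0 : ℝ) < ((s : ℝ) ^ s * (m : ℝ) ^ m) * Real.sqrt (2 * t) := by positivity
    refine le_of_mul_le_mul_right ?_ hQ
    calc a * (K : ℝ) ^ t * (((s : ℝ) ^ s * (m : ℝ) ^ m) * Real.sqrt (2 * t))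
        = a * Real.sqrt (2 * t) * ((K : ℝ) ^ t * ((s : ℝ) ^ s * (m : ℝ) ^ m)) := by ring
      _ = a * Real.sqrt (2 * t) * ((t : ℝ) ^ t * ((K : ℝ) - 1) ^ m) := by rw [hid]
      _ = (a * (Real.sqrt (2 * t) * (t : ℝ) ^ t)) * ((K : ℝ) - 1) ^ m := by ring
      _ ≤ (B ^ 2 * C * (Real.sqrt (2 * s) * Real.sqrt (2 * m) *
            ((s : ℝ) ^ s * (m : ℝ) ^ m))) * ((K : ℝ) - 1) ^ m :=
          mul_le_mul_of_nonneg_right h1 hKm0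
      _ ≤ (B ^ 2 * C * (Real.sqrt (2 * t) * Real.sqrt (2 * t) *
            ((s : ℝ) ^ s * (m : ℝ) ^ m))) * ((K : ℝ) - 1) ^ m := by
          gcongr
      _ = B ^ 2 * C * Real.sqrt (2 * t) * ((K : ℝ) - 1) ^ m *
            (((s : ℝ) ^ s * (m : ℝ) ^ m) * Real.sqrt (2 * t)) := by ring
  -- assemble
  set P : ℝ := ((K : ℝ) - 1) ^ (t - 2 * s) with hPdef
  have hP1 : (1 : ℝ) ≤ P := one_le_pow₀ hK1
  have hPow : ((K : ℝ) - 1) ^ m = ((K : ℝ) - 1) ^ s * P := by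
    rw [hPdef, ← pow_add]; congr 1; omega
  have hD : (0 : ℝ) < C * ((K : ℝ) - 1) ^ s := by positivity
  set x : ℝ := ((t : ℝ) * Real.log K * (K : ℝ) ^ t) / (C * ((K : ℝ) - 1) ^ s) with hxdef
  have hx0 : 0 ≤ x := by
    apply div_nonneg _ hD.le
    have : (0 : ℝ) ≤ (t : ℝ) := by positivity
    positivity
  have hR : x ≤ (t : ℝ) * Real.log K * (B ^ 2 / a) * Real.sqrt (2 * t) * P := by
    rw [hxdef, div_le_iff₀ hD]
    have hcoef : (0 : ℝ) ≤ (t : ℝ) * Real.log K / a := by positivity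
    calc (t : ℝ) * Real.log K * (K : ℝ) ^ t
        = ((t : ℝ) * Real.log K / a) * (a * (K : ℝ) ^ t) := by
          field_simp
      _ ≤ ((t : ℝ) * Real.log K / a) * (B ^ 2 * C * Real.sqrt (2 * t) * ((K : ℝ) - 1) ^ m) :=
          mul_le_mul_of_nonneg_left key hcoef
      _ = (t : ℝ) * Real.log K * (B ^ 2 / a) * Real.sqrt (2 * t) * P *
            (C * ((K : ℝ) - 1) ^ s) := by
          rw [hPow]; field_simp
  -- scalar bound
  have hsqrt2t : Real.sqrt (2 * t) = Real.sqrt 2 * Real.sqrt t := Real.sqrt_mul (by norm_num) _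
  have hsq1 : 1 ≤ Real.sqrt t := Real.one_le_sqrt.mpr htR
  have hsq2 : Real.sqrt 2 * M + 1 ≤ Real.sqrt t :=
    (Real.le_sqrt (by positivity) htR0.le).mpr htsq
  have hmul : Real.sqrt t * Real.sqrt t = (t : ℝ) := Real.mul_self_sqrt htR0.le
  have hs2 : 0 ≤ Real.sqrt 2 := Real.sqrt_nonneg 2
  have hstep : Real.sqrt 2 * M * Real.sqrt t + 1 ≤ (t : ℝ) := by
    calc Real.sqrt 2 * M * Real.sqrt t + 1
        ≤ Real.sqrt 2 * M * Real.sqrt t + Real.sqrt t := by linarith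
      _ = (Real.sqrt 2 * M + 1) * Real.sqrt t := by ring
      _ ≤ Real.sqrt t * Real.sqrt t := by
          apply mul_le_mul_of_nonneg_right hsq2 (by linarith)
      _ = (t : ℝ) := hmul
  have hscalar : (t : ℝ) * Real.log K * (B ^ 2 / a) * Real.sqrt (2 * t) + 1 ≤ (t : ℝ) ^ 2 := by
    have hMeq : (t : ℝ) * Real.log K * (B ^ 2 / a) * Real.sqrt (2 * t)
        = (t : ℝ) * (Real.sqrt 2 * M * Real.sqrt t) := by
      rw [hsqrt2t, hMdef]; field_simp
    rw [hMeq]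
    calc (t : ℝ) * (Real.sqrt 2 * M * Real.sqrt t) + 1
        ≤ (t : ℝ) * (Real.sqrt 2 * M * Real.sqrt t) + t := by linarith
      _ = (t : ℝ) * (Real.sqrt 2 * M * Real.sqrt t + 1) := by ring
      _ ≤ (t : ℝ) * t := mul_le_mul_of_nonneg_left hstep htR0.le
      _ = (t : ℝ) ^ 2 := by ring
  -- finish
  have hceil : (⌈x⌉₊ : ℝ) ≤ x + 1 := (Nat.ceil_lt_add_one hx0).le
  have hP0 : (0 : ℝ) ≤ P := by linarith
  calc (⌈x⌉₊ : ℝ) ≤ x + 1 := hceil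
    _ ≤ (t : ℝ) * Real.log K * (B ^ 2 / a) * Real.sqrt (2 * t) * P + 1 := by linarith
    _ ≤ (t : ℝ) * Real.log K * (B ^ 2 / a) * Real.sqrt (2 * t) * P + P := by linarith
    _ = ((t : ℝ) * Real.log K * (B ^ 2 / a) * Real.sqrt (2 * t) + 1) * P := by ring
    _ ≤ (t : ℝ) ^ 2 * P := mul_le_mul_of_nonneg_right hscalar hP0
end
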